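/- Let (x(t), v(t)) be a solution of the Cucker–Smale system for N agents in ℝ^d, and suppose there exists X_M > 0 such that the spatial variance satisfies X(t) ≤ X_M for all t ≥ 0. Then the velocity variance decays exponentially: V(t) ≤ V(0)·exp(−2·a(2√(N·X_M))·t) for all t ≥ 0; in particular V(t) → 0 as t → ∞ and the solution converges to flocking. -/

import Mathlib

/-!
Writing `w i = ∑ j A i j (v j - v i)` for the alignment force with symmetric weights `A`, one has
`∑ w i = 0`, so `d/dt ∑ᵢⱼ ‖vᵢ - vⱼ‖² = 4N ∑ᵢ ⟪vᵢ, wᵢ⟫ = -2N ∑ᵢⱼ Aᵢⱼ ‖vᵢ - vⱼ‖²`. A bound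
`X ≤ X_M` on the spatial variance bounds every distance `‖xᵢ - xⱼ‖` by `2√(N X_M)`, hence every
weight `a ‖xᵢ - xⱼ‖ / N` from below by `a(2√(N X_M)) / N` since `a` is nonincreasing. So
`V' ≤ -2 a(2√(N X_M)) V`, and Grönwall's inequality gives the exponential decay.
-/

open Filter Finset
open scoped RealInnerProductSpace

section Variance

variable {ι E : Type*} [Fintype ι]

lemma card_mul_norm_sub_sq_le [SeminormedAddCommGroup E] (u : ι → E) (i j : ι) :
    Fintype.card ι * ‖u i - u j‖ ^ 2 ≤ 2 * ∑ k, ∑ l, ‖u k - u l‖ ^ 2 := by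
  rcases eq_or_ne i j with rfl | hij
  · rw [sub_self, norm_zero, zero_pow two_ne_zero, mul_zero]
    positivity
  have hvia : ∀ k, ‖u i - u j‖ ^ 2 ≤ 2 * (‖u i - u k‖ ^ 2 + ‖u j - u k‖ ^ 2) := by
    intro k
    have htri := norm_sub_le_norm_sub_add_norm_sub (u i) (u k) (u j)
    rw [norm_sub_rev (u k)] at htri
    nlinarith [norm_nonneg (u i - u j), sq_nonneg (‖u i - u k‖ - ‖u j - u k‖)]
  calc (Fintype.card ι : ℝ) * ‖u i - u j‖ ^ 2 = ∑ _k : ι, ‖u i - u j‖ ^ 2 := by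
        rw [sum_const, card_univ, nsmul_eq_mul]
    _ ≤ ∑ k, 2 * (‖u i - u k‖ ^ 2 + ‖u j - u k‖ ^ 2) := sum_le_sum fun k _ => hvia k
    _ = 2 * (∑ k, ‖u i - u k‖ ^ 2 + ∑ k, ‖u j - u k‖ ^ 2) := by
        rw [← mul_sum, sum_add_distrib]
    _ ≤ 2 * ∑ k, ∑ l, ‖u k - u l‖ ^ 2 := by
        gcongr
        exact add_le_sum (f := fun k => ∑ l, ‖u k - u l‖ ^ 2) (fun k _ => by positivity)
          (mem_univ i) (mem_univ j) hij

lemma norm_sub_le_of_sum_sum_norm_sub_sq_le [SeminormedAddCommGroup E] {N : ℕ} (hN : 0 < N)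
    (u : Fin N → E) {M : ℝ} (hM : ∑ k, ∑ l, ‖u k - u l‖ ^ 2 ≤ 2 * N ^ 2 * M) (i j : Fin N) :
    ‖u i - u j‖ ≤ 2 * √(N * M) := by
  have hNpos : (0 : ℝ) < N := by exact_mod_cast hN
  have h := card_mul_norm_sub_sq_le u i j
  rw [Fintype.card_fin] at h
  have hsq : (‖u i - u j‖ / 2) ^ 2 ≤ N * M := by
    rw [div_pow, div_le_iff₀ (by norm_num)]
    nlinarith
  linarith [Real.le_sqrt_of_sq_le hsq]

variable [NormedAddCommGroup E] [InnerProductSpace ℝ E]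

lemma sum_sum_inner_sub_sub (u w : ι → E) :
    ∑ i, ∑ j, ⟪u i - u j, w i - w j⟫ =
      2 * (Fintype.card ι * ∑ i, ⟪u i, w i⟫ - ⟪∑ i, u i, ∑ i, w i⟫) := by
  simp only [inner_sub_left, inner_sub_right, sum_sub_distrib, sum_const, card_univ,
    nsmul_eq_mul, ← inner_sum, ← sum_inner, mul_sum]
  ring

lemma hasDerivAt_sum_sum_norm_sub_sq {u : ℝ → ι → E} {u' : ι → E} {t : ℝ}
    (hu : ∀ i, HasDerivAt (fun s => u s i) (u' i) t) :
    HasDerivAt (fun s => ∑ i, ∑ j, ‖u s i - u s j‖ ^ 2)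
      (2 * ∑ i, ∑ j, ⟪u t i - u t j, u' i - u' j⟫) t := by
  simp only [mul_sum]
  exact HasDerivAt.fun_sum fun i _ => HasDerivAt.fun_sum fun j _ => ((hu i).sub (hu j)).norm_sq

end Variance

lemma le_mul_exp_of_hasDerivAt_le_mul {f f' : ℝ → ℝ} {K a : ℝ}
    (hf : ∀ t, HasDerivAt f (f' t) t) (hf' : ∀ t > a, f' t ≤ K * f t) :
    ∀ t ≥ a, f t ≤ f a * Real.exp (K * (t - a)) := by
  set g : ℝ → ℝ := fun s => f s * Real.exp (-K * (s - a))
  have hg : ∀ s, HasDerivAt g ((f' s - K * f s) * Real.exp (-K * (s - a))) s := by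
    intro s
    have hexp : HasDerivAt (fun s => Real.exp (-K * (s - a))) (Real.exp (-K * (s - a)) * -K) s :=
      by simpa using (((hasDerivAt_id s).sub_const a).const_mul (-K)).exp
    exact ((hf s).mul hexp).congr_deriv (by ring)
  have hanti : AntitoneOn g (Set.Ici a) := by
    refine antitoneOn_of_hasDerivWithinAt_nonpos (convex_Ici a)
      (HasDerivAt.continuousOn fun s _ => hg s) (fun s _ => (hg s).hasDerivWithinAt) ?_
    intro s hs
    rw [interior_Ici] at hs
    exact mul_nonpos_of_nonpos_of_nonneg (by linarith [hf' s hs]) (Real.exp_pos _).le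
  intro t ht
  have hgt : g t ≤ f a := by
    simpa [g] using hanti Set.self_mem_Ici ht ht
  calc f t = g t * Real.exp (K * (t - a)) := by
        rw [mul_assoc, ← Real.exp_add]
        simp
    _ ≤ f a * Real.exp (K * (t - a)) := by gcongr

section Alignment

variable {ι E : Type*} [Fintype ι]

def alignmentForce [AddCommGroup E] [Module ℝ E] (A : ι → ι → ℝ) (u : ι → E) (i : ι) : E :=
  ∑ j, A i j • (u j - u i)

lemma sum_alignmentForce_eq_zero [AddCommGroup E] [Module ℝ E]
    {A : ι → ι → ℝ} (hA : ∀ i j, A i j = A j i) (u : ι → E) :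
    ∑ i, alignmentForce A u i = 0 := by
  have hanti : ∑ i, alignmentForce A u i = -∑ i, alignmentForce A u i := by
    unfold alignmentForce
    conv_lhs => rw [sum_comm]
    simp only [← sum_neg_distrib]
    refine sum_congr rfl fun i _ => sum_congr rfl fun j _ => ?_
    rw [hA, ← smul_neg, neg_sub]
  have htwo : (2 : ℝ) • ∑ i, alignmentForce A u i = 0 := by
    rw [two_smul]
    nth_rw 1 [hanti]
    exact neg_add_cancel _
  exact (smul_eq_zero.mp htwo).resolve_left two_ne_zero

variable [NormedAddCommGroup E] [InnerProductSpace ℝ E] {A : ι → ι → ℝ}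

lemma two_mul_sum_inner_alignmentForce (hA : ∀ i j, A i j = A j i) (u : ι → E) :
    2 * ∑ i, ⟪u i, alignmentForce A u i⟫ = -∑ i, ∑ j, A i j * ‖u i - u j‖ ^ 2 := by
  have hpair : ∀ a b : E, ⟪a, b - a⟫ + ⟪b, a - b⟫ = -‖a - b‖ ^ 2 := by
    intro a b
    rw [norm_sub_sq_real]
    simp only [inner_sub_right, real_inner_self_eq_norm_sq, real_inner_comm a b]
    ring
  have hswap : ∑ i, ∑ j, A i j * ⟪u i, u j - u i⟫ = ∑ i, ∑ j, A i j * ⟪u j, u i - u j⟫ := by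
    rw [sum_comm]
    simp only [hA]
  simp only [alignmentForce, inner_sum, real_inner_smul_right]
  rw [two_mul]
  nth_rw 2 [hswap]
  simp only [← sum_add_distrib, ← mul_add, hpair, mul_neg, sum_neg_distrib]

lemma sum_sum_inner_sub_alignmentForce_le (hA : ∀ i j, A i j = A j i) {α : ℝ}
    (hα : ∀ i j, α ≤ A i j) (u : ι → E) :
    ∑ i, ∑ j, ⟪u i - u j, alignmentForce A u i - alignmentForce A u j⟫ ≤
      -(Fintype.card ι * α) * ∑ i, ∑ j, ‖u i - u j‖ ^ 2 := by
  rw [sum_sum_inner_sub_sub, sum_alignmentForce_eq_zero hA, inner_zero_right, sub_zero,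
    mul_left_comm, two_mul_sum_inner_alignmentForce hA]
  have hweights : α * ∑ i, ∑ j, ‖u i - u j‖ ^ 2 ≤ ∑ i, ∑ j, A i j * ‖u i - u j‖ ^ 2 := by
    simp only [mul_sum]
    gcongr with i _ j _
    exact hα i j
  have hcard : (0 : ℝ) ≤ Fintype.card ι := Nat.cast_nonneg _
  nlinarith

lemma sum_sum_norm_sub_sq_le_mul_exp {v : ℝ → ι → E} {A : ℝ → ι → ι → ℝ} {β : ℝ}
    (hv : ∀ i t, HasDerivAt (fun s => v s i) (alignmentForce (A t) (v t) i) t)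
    (hA : ∀ t i j, A t i j = A t j i) (hβ : ∀ t > (0 : ℝ), ∀ i j, β ≤ A t i j) :
    ∀ t ≥ (0 : ℝ), ∑ i, ∑ j, ‖v t i - v t j‖ ^ 2 ≤
      (∑ i, ∑ j, ‖v 0 i - v 0 j‖ ^ 2) * Real.exp (-(2 * Fintype.card ι * β) * t) := by
  have hdecay := le_mul_exp_of_hasDerivAt_le_mul (K := -(2 * Fintype.card ι * β))
    (fun t => hasDerivAt_sum_sum_norm_sub_sq fun i => hv i t) fun t ht => by
      linarith [sum_sum_inner_sub_alignmentForce_le (hA t) (hβ t ht) (v t)]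
  simpa only [sub_zero] using hdecay

end Alignment

theorem cucker_smale_exponential_decay_general
    {d N : ℕ} (hN : 0 < N)
    (a : ℝ → ℝ)
    (ha_pos : ∀ s, 0 ≤ s → 0 < a s)
    (ha_anti : AntitoneOn a (Set.Ici 0))
    (x v : ℝ → Fin N → EuclideanSpace ℝ (Fin d))
    (hv : ∀ i t, HasDerivAt (fun s => v s i)
      ((N : ℝ)⁻¹ • ∑ j, a ‖x t j - x t i‖ • (v t j - v t i)) t)
    (X V : ℝ → ℝ)
    (hX : ∀ t, X t = (1 / (2 * (N : ℝ) ^ 2)) * ∑ i, ∑ j, ‖x t i - x t j‖ ^ 2)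
    (hV : ∀ t, V t = (1 / (2 * (N : ℝ) ^ 2)) * ∑ i, ∑ j, ‖v t i - v t j‖ ^ 2)
    (X_M : ℝ) (hbound : ∀ t ≥ (0 : ℝ), X t ≤ X_M) :
    (∀ t ≥ (0 : ℝ), V t ≤ V 0 * Real.exp (-2 * a (2 * Real.sqrt (N * X_M)) * t)) ∧
    Tendsto V atTop (nhds 0) := by
  set α := a (2 * √(N * X_M))
  have hclose : ∀ t ≥ (0 : ℝ), ∀ i j, ‖x t j - x t i‖ ≤ 2 * √(N * X_M) := by
    intro t ht i j
    have hXt := hbound t ht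
    rw [hX t, one_div, inv_mul_le_iff₀ (by positivity)] at hXt
    exact norm_sub_le_of_sum_sum_norm_sub_sq_le hN (x t) hXt j i
  set A : ℝ → Fin N → Fin N → ℝ := fun t i j => (N : ℝ)⁻¹ * a ‖x t j - x t i‖
  have hA : ∀ t i j, A t i j = A t j i := fun t i j => by simp only [A, norm_sub_rev]
  have hAα : ∀ t > (0 : ℝ), ∀ i j, (N : ℝ)⁻¹ * α ≤ A t i j := fun t ht i j =>
    mul_le_mul_of_nonneg_left
      (ha_anti (norm_nonneg _) (Set.mem_Ici.mpr (by positivity)) (hclose t ht.le i j))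
      (by positivity)
  have hv' : ∀ i t, HasDerivAt (fun s => v s i) (alignmentForce (A t) (v t) i) t := by
    simpa only [alignmentForce, A, smul_sum, smul_smul] using hv
  have hrate : 2 * (Fintype.card (Fin N) : ℝ) * ((N : ℝ)⁻¹ * α) = 2 * α := by
    rw [Fintype.card_fin]
    field_simp
  have hdecay : ∀ t ≥ (0 : ℝ), V t ≤ V 0 * Real.exp (-2 * α * t) := by
    intro t ht
    have h := sum_sum_norm_sub_sq_le_mul_exp hv' hA hAα t ht
    rw [hrate] at h
    rw [hV t, hV 0, mul_assoc, neg_mul]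
    gcongr
  refine ⟨hdecay, ?_⟩
  have hα : 0 < α := ha_pos _ (by positivity)
  have hexp : Tendsto (fun t => V 0 * Real.exp (-2 * α * t)) atTop (nhds 0) := by
    simpa using (Real.tendsto_exp_atBot.comp
      (tendsto_id.const_mul_atTop_of_neg (by linarith : -2 * α < 0))).const_mul (V 0)
  exact squeeze_zero' (Eventually.of_forall fun t => by rw [hV t]; positivity)
    ((eventually_ge_atTop 0).mono hdecay) hexp

/-- If along a solution of the Cucker–Smale system the spatial
variance remains bounded, `X(t) ≤ X_M` for all `t ≥ 0`, then the velocity variance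
decays exponentially: `V(t) ≤ V(0)·exp(−2·a(2√(N·X_M))·t)` for all `t ≥ 0`; in
particular `V(t) → 0`, so the solution converges to flocking. -/
theorem cucker_smale_exponential_decay
    {d N : ℕ} (hN : 0 < N)
    (a : ℝ → ℝ)
    (ha_pos : ∀ s, 0 ≤ s → 0 < a s)
    (ha_anti : AntitoneOn a (Set.Ici 0))
    (ha_smooth : ContDiffOn ℝ 1 a (Set.Ici 0))
    (x v : ℝ → Fin N → EuclideanSpace ℝ (Fin d))
    (hx : ∀ i t, HasDerivAt (fun s => x s i) (v t i) t)
    (hv : ∀ i t, HasDerivAt (fun s => v s i)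
      ((N : ℝ)⁻¹ • ∑ j, a ‖x t j - x t i‖ • (v t j - v t i)) t)
    (X V : ℝ → ℝ)
    (hX : ∀ t, X t = (1 / (2 * (N : ℝ) ^ 2)) * ∑ i, ∑ j, ‖x t i - x t j‖ ^ 2)
    (hV : ∀ t, V t = (1 / (2 * (N : ℝ) ^ 2)) * ∑ i, ∑ j, ‖v t i - v t j‖ ^ 2)
    (X_M : ℝ) (hXM : 0 < X_M) (hbound : ∀ t ≥ (0 : ℝ), X t ≤ X_M) :
    (∀ t ≥ (0 : ℝ), V t ≤ V 0 * Real.exp (-2 * a (2 * Real.sqrt (N * X_M)) * t)) ∧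
    Tendsto V atTop (nhds 0) :=
  cucker_smale_exponential_decay_general hN a ha_pos ha_anti x v hv X V hX hV X_M hbound
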